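/- For any simple game W on n voters, if the polytope P_W is nonempty then it is n-dimensional: the affine span of P_W in ℝ^{n+1} has dimension n (equivalently, P_W has nonempty relative interior of dimension n inside the affine hyperplane {(q,w) ∈ ℝ × ℝ^n : Σ_{i=1}^n w_i = 1}). -/

import Mathlib

/-- A simple game on `n` voters. -/
def IsSimpleGame (n : ℕ) (W : Set (Finset (Fin n))) : Prop :=
  Finset.univ ∈ W ∧ ∅ ∉ W ∧ ∀ S ∈ W, ∀ R : Finset (Fin n), S ⊆ R → R ∈ W

/-- The polytope of all normalized realizations `(q, w)` of the game `W`. -/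
def gamePolytope (n : ℕ) (W : Set (Finset (Fin n))) : Set (ℝ × (Fin n → ℝ)) :=
  {p | 0 < p.1 ∧ p.1 ≤ 1 ∧ (∀ i, 0 ≤ p.2 i) ∧ Monotone p.2 ∧ (∑ i, p.2 i) = 1 ∧
    ∀ A : Finset (Fin n), A ∈ W ↔ p.1 ≤ ∑ i ∈ A, p.2 i}

/-!
`P_W` lies in the hyperplane `∑ wᵢ = 1`, whose direction has dimension `n`. Conversely, moving a
realization `(q, w)` a little towards `(-1, u)`, with `u` positive, strictly increasing and of sum
one, makes every defining inequality of `P_W` strict: losing coalitions stay losing by continuity,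
and winning ones now beat the lowered quota. All points of the hyperplane near such a strict
realization lie in `P_W`, so `P_W` spans the hyperplane.
-/

open Filter Topology

theorem vectorSpan_le_ker_of_forall_eq {k E F : Type*} [Ring k] [AddCommGroup E] [Module k E]
    [AddCommGroup F] [Module k F] {f : E →ₗ[k] F} {s : Set E} {c : F} (hs : ∀ x ∈ s, f x = c) :
    vectorSpan k s ≤ LinearMap.ker f := by
  rw [vectorSpan_def, Submodule.span_le]
  rintro _ ⟨x, hx, y, hy, rfl⟩
  simp [hs x hx, hs y hy]

theorem ker_le_vectorSpan_of_eventually {𝕜 E F : Type*} [NontriviallyNormedField 𝕜]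
    [AddCommGroup E] [Module 𝕜 E] [TopologicalSpace E] [ContinuousAdd E] [ContinuousSMul 𝕜 E]
    [AddCommGroup F] [Module 𝕜 F] {f : E →ₗ[𝕜] F} {s : Set E} {x : E}
    (h : ∀ᶠ y in 𝓝 x, f y = f x → y ∈ s) : LinearMap.ker f ≤ vectorSpan 𝕜 s := by
  intro v hv
  have hline : Tendsto (fun t : 𝕜 => x + t • v) (𝓝[≠] 0) (𝓝 x) := by
    have hcont : Continuous fun t : 𝕜 => x + t • v := by fun_prop
    simpa using hcont.continuousAt.tendsto.mono_left (nhdsWithin_le_nhds (a := (0 : 𝕜)))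
  obtain ⟨t, hts, ht0⟩ := ((hline.eventually h).and self_mem_nhdsWithin).exists
  have hmem : x + t • v ∈ s := hts (by simp [LinearMap.mem_ker.1 hv])
  have htv : t • v ∈ vectorSpan 𝕜 s := by
    simpa using vsub_mem_vectorSpan 𝕜 hmem (h.self_of_nhds rfl)
  exact (Submodule.smul_mem_iff _ ht0).1 htv

section WeightSum

variable (ι : Type*) [Fintype ι]

def weightSum : (ℝ × (ι → ℝ)) →ₗ[ℝ] ℝ :=
  ∑ i, (LinearMap.proj i).comp (LinearMap.snd ℝ ℝ (ι → ℝ))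

variable {ι}

@[simp]
theorem weightSum_apply (p : ℝ × (ι → ℝ)) : weightSum ι p = ∑ i, p.2 i := by
  simp [weightSum]

theorem finrank_ker_weightSum [Nonempty ι] :
    Module.finrank ℝ (LinearMap.ker (weightSum ι)) = Fintype.card ι := by
  have hne : weightSum ι ≠ 0 := fun h => by
    simpa using LinearMap.congr_fun h (0, fun _ => 1)
  have := Module.Dual.finrank_ker_add_one_of_ne_zero hne
  simp only [Module.finrank_prod, Module.finrank_self, Module.finrank_fintype_fun_eq_card] at this
  omega

end WeightSum

theorem exists_pos_strictMono_sum_eq_one {n : ℕ} (hn : n ≠ 0) :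
    ∃ u : Fin n → ℝ, (∀ i, 0 < u i) ∧ StrictMono u ∧ ∑ i, u i = 1 := by
  have hS : 0 < ∑ j : Fin n, ((j : ℝ) + 1) :=
    Finset.sum_pos (fun j _ => by positivity) (Finset.univ_nonempty_iff.2 ⟨⟨0, by omega⟩⟩)
  refine ⟨fun i => ((i : ℝ) + 1) / ∑ j : Fin n, ((j : ℝ) + 1), fun i => by positivity,
    fun i j hij => div_lt_div_of_pos_right (by simpa using hij) hS, ?_⟩
  rw [← Finset.sum_div, div_self hS.ne']

structure IsStrictRealization {n : ℕ} (W : Set (Finset (Fin n))) (p : ℝ × (Fin n → ℝ)) :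
    Prop where
  quota_pos : 0 < p.1
  quota_lt_one : p.1 < 1
  weight_pos : ∀ i, 0 < p.2 i
  strictMono : StrictMono p.2
  quota_lt_of_mem : ∀ A ∈ W, p.1 < ∑ i ∈ A, p.2 i
  lt_quota_of_notMem : ∀ A ∉ W, ∑ i ∈ A, p.2 i < p.1

namespace IsStrictRealization

variable {n : ℕ} {W : Set (Finset (Fin n))} {p : ℝ × (Fin n → ℝ)}

theorem mem_gamePolytope (h : IsStrictRealization W p) (hsum : ∑ i, p.2 i = 1) :
    p ∈ gamePolytope n W :=
  ⟨h.quota_pos, h.quota_lt_one.le, fun i => (h.weight_pos i).le, h.strictMono.monotone, hsum,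
    fun A => ⟨fun hA => (h.quota_lt_of_mem A hA).le,
      fun hle => by_contra fun hA => (h.lt_quota_of_notMem A hA).not_ge hle⟩⟩

theorem eventually (h : IsStrictRealization W p) : ∀ᶠ y in 𝓝 p, IsStrictRealization W y := by
  have hq : Continuous fun y : ℝ × (Fin n → ℝ) => y.1 := continuous_fst
  have hw (i : Fin n) : Continuous fun y : ℝ × (Fin n → ℝ) => y.2 i := by fun_prop
  have hs (A : Finset (Fin n)) : Continuous fun y : ℝ × (Fin n → ℝ) => ∑ i ∈ A, y.2 i := by
    fun_prop
  have hmono : ∀ᶠ y in 𝓝 p, ∀ i j, i < j → y.2 i < y.2 j :=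
    eventually_all.2 fun i => eventually_all.2 fun j => eventually_imp_distrib_left.2 fun hij =>
      (hw i).continuousAt.eventually_lt (hw j).continuousAt (h.strictMono hij)
  have hwin : ∀ᶠ y in 𝓝 p, ∀ A ∈ W, y.1 < ∑ i ∈ A, y.2 i :=
    eventually_all.2 fun A => eventually_imp_distrib_left.2 fun hA =>
      hq.continuousAt.eventually_lt (hs A).continuousAt (h.quota_lt_of_mem A hA)
  have hlose : ∀ᶠ y in 𝓝 p, ∀ A ∉ W, ∑ i ∈ A, y.2 i < y.1 :=
    eventually_all.2 fun A => eventually_imp_distrib_left.2 fun hA =>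
      (hs A).continuousAt.eventually_lt hq.continuousAt (h.lt_quota_of_notMem A hA)
  filter_upwards [continuousAt_const.eventually_lt hq.continuousAt h.quota_pos,
    hq.continuousAt.eventually_lt continuousAt_const h.quota_lt_one,
    eventually_all.2 fun i => continuousAt_const.eventually_lt (hw i).continuousAt (h.weight_pos i),
    hmono, hwin, hlose] with y h0 h1 hpos hmono hwin hlose
  exact ⟨h0, h1, hpos, fun i j hij => hmono i j hij, hwin, hlose⟩

end IsStrictRealization

section Perturbation

variable {n : ℕ} {W : Set (Finset (Fin n))} {p : ℝ × (Fin n → ℝ)}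

theorem eventually_lt_quota_of_mem_gamePolytope (hp : p ∈ gamePolytope n W) :
    ∀ᶠ y in 𝓝 p, 0 < y.1 ∧ ∀ A ∉ W, ∑ i ∈ A, y.2 i < y.1 := by
  have hq : Continuous fun y : ℝ × (Fin n → ℝ) => y.1 := continuous_fst
  have hs (A : Finset (Fin n)) : Continuous fun y : ℝ × (Fin n → ℝ) => ∑ i ∈ A, y.2 i := by
    fun_prop
  refine (continuousAt_const.eventually_lt hq.continuousAt hp.1).and
    (eventually_all.2 fun A => eventually_imp_distrib_left.2 fun hA => ?_)
  exact (hs A).continuousAt.eventually_lt hq.continuousAt (not_le.1 (mt (hp.2.2.2.2.2 A).2 hA))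

def towardsStrict (p : ℝ × (Fin n → ℝ)) (u : Fin n → ℝ) (t : ℝ) : ℝ × (Fin n → ℝ) :=
  ((1 - t) * p.1 - t, fun i => (1 - t) * p.2 i + t * u i)

theorem exists_isStrictRealization (hp : p ∈ gamePolytope n W) :
    ∃ p' : ℝ × (Fin n → ℝ), ∑ i, p'.2 i = 1 ∧ IsStrictRealization W p' := by
  obtain ⟨-, hq1, hw0, hwmono, hwsum, hwin⟩ := id hp
  have hn : n ≠ 0 := by
    rintro rfl
    simp at hwsum
  obtain ⟨u, hu0, hu, husum⟩ := exists_pos_strictMono_sum_eq_one hn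
  have hcont : Continuous (towardsStrict p u) := by
    unfold towardsStrict
    fun_prop
  have hnear : ∀ᶠ t in 𝓝[>] 0, 0 < (towardsStrict p u t).1 ∧
      ∀ A ∉ W, ∑ i ∈ A, (towardsStrict p u t).2 i < (towardsStrict p u t).1 := by
    refine (hcont.tendsto' 0 p ?_).mono_left nhdsWithin_le_nhds |>.eventually
      (eventually_lt_quota_of_mem_gamePolytope hp)
    simp [towardsStrict]
  obtain ⟨t, ⟨hq0, hlose⟩, ht0, ht1⟩ := (hnear.and (Ioo_mem_nhdsGT zero_lt_one)).exists
  have hsum (A : Finset (Fin n)) : ∑ i ∈ A, (towardsStrict p u t).2 i =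
      (1 - t) * ∑ i ∈ A, p.2 i + t * ∑ i ∈ A, u i := by
    simp only [towardsStrict, Finset.sum_add_distrib, Finset.mul_sum]
  refine ⟨towardsStrict p u t, by rw [hsum, hwsum, husum]; ring, hq0, ?_, fun i => ?_,
    fun i j hij => ?_, fun A hA => ?_, hlose⟩
  · simp only [towardsStrict]
    nlinarith
  · simp only [towardsStrict]
    nlinarith [hw0 i, hu0 i]
  · simp only [towardsStrict]
    nlinarith [hwmono hij.le, hu hij]
  · have hwA := (hwin A).1 hA
    have huA : 0 ≤ ∑ i ∈ A, u i := Finset.sum_nonneg fun i _ => (hu0 i).le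
    rw [hsum]
    simp only [towardsStrict]
    nlinarith

end Perturbation

theorem gamePolytope_dim_general
    (n : ℕ) (W : Set (Finset (Fin n)))
    (hne : (gamePolytope n W).Nonempty) :
    Module.finrank ℝ (affineSpan ℝ (gamePolytope n W)).direction = n := by
  obtain ⟨p, hp⟩ := hne
  obtain ⟨p', hsum, hstrict⟩ := exists_isStrictRealization hp
  have : NeZero n := ⟨by rintro rfl; simp at hsum⟩
  have hspan : vectorSpan ℝ (gamePolytope n W) = LinearMap.ker (weightSum (Fin n)) :=
    le_antisymm (vectorSpan_le_ker_of_forall_eq fun x hx => by simpa using hx.2.2.2.2.1)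
      (ker_le_vectorSpan_of_eventually <| hstrict.eventually.mono fun y hy hy1 =>
        hy.mem_gamePolytope (by simpa [hsum] using hy1))
  rw [direction_affineSpan, hspan, finrank_ker_weightSum, Fintype.card_fin]

/-- If nonempty, the polytope of a simple game on `n` voters is `n`-dimensional:
its affine span in `ℝ^(n+1)` has dimension `n`. -/
theorem gamePolytope_dim
    (n : ℕ) (W : Set (Finset (Fin n))) (hSG : IsSimpleGame n W)
    (hne : (gamePolytope n W).Nonempty) :
    Module.finrank ℝ (affineSpan ℝ (gamePolytope n W)).direction = n :=
  gamePolytope_dim_general n W hne
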